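/- arXiv:2208.00148 — 5 statements merged into one kernel-verified Lean document; each statement's English description precedes it below -/
import Mathlib

section
/- Let α be a real number with α > -1/2 and α ≠ 1. For every natural number n, ∫_{-1}^{1} x · C_{2n+1}^{α}(x) dx = (2(α+n) / ((α-1)(2n+3))) · binom(2α+2n-2, 2n+1), where binom denotes the generalized binomial coefficient. -/
open MeasureTheory Real

/-- The Gegenbauer polynomial `C_n^α` evaluated at `x`. -/
noncomputable def gegenbauer (α : ℝ) (n : ℕ) (x : ℝ) : ℝ :=
  ∑ k ∈ Finset.range (n / 2 + 1),
    (-1 : ℝ) ^ k *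
      (Real.Gamma ((n : ℝ) - (k : ℝ) + α) /
        (Real.Gamma α * (Nat.factorial k : ℝ) * (Nat.factorial (n - 2 * k) : ℝ))) *
      (2 * x) ^ (n - 2 * k)

/-- The generalized binomial coefficient `binom(z, k)` for real `z`. -/
noncomputable def genBinom (z : ℝ) (k : ℕ) : ℝ :=
  (∏ i ∈ Finset.range k, (z - (i : ℝ))) / (Nat.factorial k : ℝ)

/-!
Integrating term by term turns the left-hand side into the terminating hypergeometric sum
`S n = ∑ₖ oddMomentTerm α n k`. Zeilberger's algorithm yields the first-order recurrence
`S (n + 1) = oddMomentRatio α n * S n`, certified by the telescoping identity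
`oddMomentTerm_succ_left`; the closed form obeys the same recurrence and agrees with `S 0`.
-/

open Finset
open scoped Nat

/-- At `α = 0` both sides vanish, the left one because of the junk value `Γ 0 = 0`. -/
theorem Real.Gamma_add_nat_div_Gamma_eq {α : ℝ} (hα : ∀ k : ℕ, α ≠ -(k + 1)) {n : ℕ}
    (hn : n ≠ 0) : Gamma (α + n) / Gamma α = (ascPochhammer ℝ n).eval α := by
  by_cases h0 : α = 0
  · simp [h0, Gamma_zero, hn]
  have hΓ : Gamma α ≠ 0 := Gamma_ne_zero fun k => by cases k <;> simp_all
  clear hn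
  induction n with
  | zero => simp [hΓ]
  | succ n ih =>
    have hαn : α + n ≠ 0 := by cases n <;> simp_all [add_eq_zero_iff_eq_neg]
    rw [ascPochhammer_succ_eval, ← ih, Nat.cast_succ, ← add_assoc, Gamma_add_one hαn]
    ring

theorem integral_mul_two_mul_pow_odd (m : ℕ) :
    ∫ x in (-1 : ℝ)..1, x * (2 * x) ^ (2 * m + 1) = 4 ^ (m + 1) / (2 * m + 3) := by
  have hpow (x : ℝ) : x * (2 * x) ^ (2 * m + 1) = 2 ^ (2 * m + 1) * x ^ (2 * m + 2) := by ring
  have hfour : (4 : ℝ) ^ (m + 1) = 2 ^ (2 * m + 1) * 2 := by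
    rw [← pow_succ, show 2 * m + 1 + 1 = 2 * (m + 1) by ring, pow_mul]
    norm_num
  simp_rw [hpow]
  rw [intervalIntegral.integral_const_mul, integral_pow, Odd.neg_one_pow ⟨m + 1, by ring⟩,
    hfour]
  push_cast
  ring

noncomputable def oddMomentTerm (α : ℝ) (n k : ℕ) : ℝ :=
  (-1) ^ k * (ascPochhammer ℝ (2 * n + 1 - k)).eval α * 4 ^ (n + 1 - k) /
    (k ! * (2 * n + 1 - 2 * k)! * ((2 * n + 3 - 2 * k : ℕ) : ℝ))

theorem integral_mul_gegenbauer_odd {α : ℝ} (hα : ∀ k : ℕ, α ≠ -(k + 1)) (n : ℕ) :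
    ∫ x in (-1 : ℝ)..1, x * gegenbauer α (2 * n + 1) x =
      ∑ k ∈ range (n + 1), oddMomentTerm α n k := by
  simp only [gegenbauer, show (2 * n + 1) / 2 = n by omega, mul_sum]
  rw [intervalIntegral.integral_finsetSum fun k _ => by
    apply Continuous.intervalIntegrable; fun_prop]
  refine sum_congr rfl fun k hk => ?_
  obtain ⟨m, rfl⟩ := Nat.exists_eq_add_of_le (Nat.lt_succ_iff.mp (mem_range.mp hk))
  have hdeg : 2 * (k + m) + 1 - 2 * k = 2 * m + 1 := by omega
  have hΓ : Gamma (((2 * (k + m) + 1 : ℕ) : ℝ) - k + α) / Gamma α =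
      (ascPochhammer ℝ (2 * (k + m) + 1 - k)).eval α := by
    rw [← Gamma_add_nat_div_Gamma_eq hα (by omega)]
    congr 2
    rw [Nat.cast_sub (by omega)]
    ring
  have hpull (c x : ℝ) : x * (c * (2 * x) ^ (2 * m + 1)) = c * (x * (2 * x) ^ (2 * m + 1)) :=
    mul_left_comm x c _
  simp only [hdeg]
  rw [intervalIntegral.integral_congr fun x _ => hpull _ x, intervalIntegral.integral_const_mul,
    integral_mul_two_mul_pow_odd, div_mul_eq_div_div, ← div_div, hΓ, oddMomentTerm, hdeg,
    show 2 * (k + m) + 3 - 2 * k = 2 * m + 3 by omega, show k + m + 1 - k = m + 1 by omega]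
  push_cast
  field_simp

noncomputable def oddMomentRatio (α : ℝ) (n : ℕ) : ℝ :=
  2 * (α + n + 1) * (2 * α + 2 * n - 1) / ((2 * n + 5) * (2 * n + 2))

/-- Produced by Zeilberger's algorithm. -/
noncomputable def oddMomentCertPoly (α : ℝ) (n k : ℕ) : ℝ :=
  -8 * (12 * n ^ 3 + 14 * α * n ^ 2 + 36 * n ^ 2 + 4 * α ^ 2 * n + 33 * α * n + 33 * n
      + 7 * α ^ 2 + 16 * α + 9) * k
    + 8 * (14 * n ^ 2 + 12 * α * n + 27 * n + 2 * α ^ 2 + 13 * α + 13) * k ^ 2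
    - 16 * (2 * n + α + 2) * k ^ 3

noncomputable def oddMomentCert (α : ℝ) (n k : ℕ) : ℝ :=
  (-1) ^ k * oddMomentCertPoly α n k * (ascPochhammer ℝ (2 * n + 1 - k)).eval α *
      4 ^ (n + 1 - k) /
    ((2 * n + 5) * (2 * n + 2) * k ! * (2 * n + 2 - 2 * k)! *
      (((2 * n + 3 - 2 * k : ℕ) : ℝ) * ((2 * n + 5 - 2 * k : ℕ) : ℝ)))

noncomputable def oddMomentClosedForm (α : ℝ) (n : ℕ) : ℝ :=
  2 * (α + n) / ((α - 1) * (2 * n + 3)) * genBinom (2 * α + 2 * n - 2) (2 * n + 1)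

section

variable (α : ℝ)

theorem oddMomentTerm_succ_left {n k : ℕ} (hk : k ≤ n) :
    oddMomentTerm α (n + 1) k =
      oddMomentRatio α n * oddMomentTerm α n k +
        (oddMomentCert α n (k + 1) - oddMomentCert α n k) := by
  obtain ⟨m, rfl⟩ := Nat.exists_eq_add_of_le hk
  unfold oddMomentTerm oddMomentCert oddMomentCertPoly oddMomentRatio
  simp only [show 2 * (k + m + 1) + 1 - k = k + 2 * m + 3 by omega,
    show 2 * (k + m) + 1 - k = k + 2 * m + 1 by omega,
    show 2 * (k + m) + 1 - (k + 1) = k + 2 * m by omega,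
    show k + m + 1 + 1 - k = m + 2 by omega,
    show k + m + 1 - k = m + 1 by omega,
    show k + m + 1 - (k + 1) = m by omega,
    show 2 * (k + m + 1) + 1 - 2 * k = 2 * m + 3 by omega,
    show 2 * (k + m) + 1 - 2 * k = 2 * m + 1 by omega,
    show 2 * (k + m) + 2 - 2 * (k + 1) = 2 * m by omega,
    show 2 * (k + m) + 2 - 2 * k = 2 * m + 2 by omega,
    show 2 * (k + m + 1) + 3 - 2 * k = 2 * m + 5 by omega,
    show 2 * (k + m) + 3 - 2 * k = 2 * m + 3 by omega,
    show 2 * (k + m) + 3 - 2 * (k + 1) = 2 * m + 1 by omega,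
    show 2 * (k + m) + 5 - 2 * k = 2 * m + 5 by omega,
    show 2 * (k + m) + 5 - 2 * (k + 1) = 2 * m + 3 by omega,
    ascPochhammer_succ_eval, pow_succ, Nat.factorial_succ]
  push_cast
  field_simp
  ring

theorem oddMomentCert_zero (n : ℕ) : oddMomentCert α n 0 = 0 := by
  simp [oddMomentCert, oddMomentCertPoly]

theorem oddMomentTerm_succ_self (n : ℕ) :
    oddMomentTerm α (n + 1) (n + 1) = -oddMomentCert α n (n + 1) := by
  unfold oddMomentTerm oddMomentCert oddMomentCertPoly
  simp only [show 2 * (n + 1) + 1 - (n + 1) = n + 2 by omega,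
    show n + 1 + 1 - (n + 1) = 1 by omega,
    show 2 * (n + 1) + 1 - 2 * (n + 1) = 1 by omega,
    show 2 * (n + 1) + 3 - 2 * (n + 1) = 3 by omega,
    show 2 * n + 1 - (n + 1) = n by omega,
    show n + 1 - (n + 1) = 0 by omega,
    show 2 * n + 2 - 2 * (n + 1) = 0 by omega,
    show 2 * n + 3 - 2 * (n + 1) = 1 by omega,
    show 2 * n + 5 - 2 * (n + 1) = 3 by omega,
    ascPochhammer_succ_eval, pow_succ, pow_zero, Nat.factorial_succ, Nat.factorial_zero]
  push_cast
  field_simp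
  ring

variable {α}

theorem prod_range_add_two_sub (z : ℝ) (m : ℕ) :
    ∏ i ∈ range (m + 2), (z + 2 - i) = (z + 2) * (z + 1) * ∏ i ∈ range m, (z - i) := by
  have hshift : ∀ i ∈ range m, z + 2 - ((i + 1 + 1 : ℕ) : ℝ) = z - i := fun i _ => by
    push_cast; ring
  rw [prod_range_succ', prod_range_succ', prod_congr rfl hshift]
  push_cast
  ring

theorem oddMomentClosedForm_succ (hα1 : α ≠ 1) (n : ℕ) :
    oddMomentClosedForm α (n + 1) = oddMomentRatio α n * oddMomentClosedForm α n := by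
  have hα1' : α - 1 ≠ 0 := sub_ne_zero.mpr hα1
  have hshift : 2 * α + 2 * ((n + 1 : ℕ) : ℝ) - 2 = 2 * α + 2 * n - 2 + 2 := by
    push_cast; ring
  unfold oddMomentClosedForm oddMomentRatio genBinom
  rw [hshift, show 2 * (n + 1) + 1 = 2 * n + 1 + 2 by omega, prod_range_add_two_sub,
    Nat.factorial_succ, Nat.factorial_succ]
  push_cast
  field_simp
  ring

theorem sum_oddMomentTerm (hα1 : α ≠ 1) (n : ℕ) :
    ∑ k ∈ range (n + 1), oddMomentTerm α n k = oddMomentClosedForm α n := by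
  induction n with
  | zero =>
    have hα1' : α - 1 ≠ 0 := sub_ne_zero.mpr hα1
    rw [sum_range_one, oddMomentTerm, oddMomentClosedForm, genBinom]
    norm_num
    field_simp
    ring
  | succ n ih =>
    rw [sum_range_succ, sum_congr rfl fun k hk =>
        oddMomentTerm_succ_left α (Nat.lt_succ_iff.mp (mem_range.mp hk)),
      sum_add_distrib, ← mul_sum, sum_range_sub (oddMomentCert α n), ih, oddMomentCert_zero,
      oddMomentTerm_succ_self, oddMomentClosedForm_succ hα1]
    ring

end

theorem gegenbauer_x_odd_integral (α : ℝ) (hα : α > -1/2) (hα1 : α ≠ 1) (n : ℕ) :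
    ∫ x in (-1:ℝ)..1, x * gegenbauer α (2 * n + 1) x =
      (2 * (α + (n : ℝ)) / ((α - 1) * (2 * (n : ℝ) + 3))) *
        genBinom (2 * α + 2 * (n : ℝ) - 2) (2 * n + 1) := by
  have hα_not_neg_nat : ∀ k : ℕ, α ≠ -(k + 1) := fun k h => by
    have : (0 : ℝ) ≤ k := k.cast_nonneg
    linarith
  rw [integral_mul_gegenbauer_odd hα_not_neg_nat, sum_oddMomentTerm hα1]
  rfl
end

section
/- Let α be a real number with α ≠ 1 and let t be a real number with 0 < t < 1. Then ∫_{-1}^{1} (1 - 2xt + t²)^{-α} dx = (1/(α-1)) · Σ_{n=0}^{∞} binom(2α+2n-2, 2n+1) · t^{2n}, where the series on the right converges and binom denotes the generalized binomial coefficient. -/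
/-!
Write `β = 2 - 2α`. The substitution `u = 1 - 2xt + t²` turns the integral into
`((1 + t)^β - (1 - t)^β) / (2t(1 - α))`, and this is `1/(2t(1 - α))` times twice the odd part
of the binomial series of `(1 + t)^β`. The reflection `binom(-r, k) = (-1)^k binom(r + k - 1, k)`
with `r = 2α - 2` and `k = 2n + 1` rewrites its coefficients as those of the stated series.
-/

open MeasureTheory Real

lemma genBinom_eq_choose (z : ℝ) (k : ℕ) : genBinom z k = Ring.choose z k := by
  rw [genBinom, Ring.choose_eq_smul, ← Polynomial.aeval_eq_smeval, Polynomial.aeval_def,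
    Polynomial.eval₂_eq_eval_map, descPochhammer_map, descPochhammer_eval_eq_prod_range,
    smul_eq_mul, div_eq_inv_mul]

lemma Real.hasSum_choose_mul_pow (a : ℝ) {x : ℝ} (hx : |x| < 1) :
    HasSum (fun k ↦ Ring.choose a k * x ^ k) ((1 + x) ^ a) := by
  have := one_add_rpow_hasFPowerSeriesOnBall_zero (a := a) |>.hasSum
    (y := x) (by simpa [Metric.mem_eball, edist_dist, Real.dist_eq] using hx)
  simpa [binomialSeries, FormalMultilinearSeries.ofScalars_apply_eq, mul_comm] using this

lemma HasSum.odd_terms {c : ℕ → ℝ} {x a b : ℝ} (ha : HasSum (fun k ↦ c k * x ^ k) a)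
    (hb : HasSum (fun k ↦ c k * (-x) ^ k) b) :
    HasSum (fun n ↦ c (2 * n + 1) * x ^ (2 * n + 1)) ((a - b) / 2) := by
  have hodd : Function.Injective (fun n : ℕ ↦ 2 * n + 1) := fun m n h ↦ by simpa using h
  have heven : ∀ k ∉ Set.range (fun n : ℕ ↦ 2 * n + 1),
      c k * x ^ k - c k * (-x) ^ k = 0 := by
    intro k hk
    have : Even k := Nat.not_odd_iff_even.mp fun ⟨n, hn⟩ ↦ hk ⟨n, hn.symm⟩
    rw [this.neg_pow, sub_self]
  refine (((hodd.hasSum_iff heven).mpr (ha.sub hb)).div_const 2).congr_fun fun n ↦ ?_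
  simp only [Function.comp_apply, Odd.neg_pow (odd_two_mul_add_one n)]
  ring

lemma Real.hasSum_choose_odd_mul_pow (a : ℝ) {x : ℝ} (hx : |x| < 1) :
    HasSum (fun n ↦ Ring.choose a (2 * n + 1) * x ^ (2 * n + 1))
      (((1 + x) ^ a - (1 - x) ^ a) / 2) :=
  (hasSum_choose_mul_pow a hx).odd_terms <| by
    simpa [sub_eq_add_neg] using hasSum_choose_mul_pow a (x := -x) (by rwa [abs_neg])

lemma Ring.choose_neg_odd {R : Type*} [CommRing R] [BinomialRing R] (r : R) (n : ℕ) :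
    Ring.choose (-r) (2 * n + 1) = -Ring.choose (r + 2 * n) (2 * n + 1) := by
  rw [Ring.choose_neg, Int.negOnePow_odd _ (by exact_mod_cast odd_two_mul_add_one n),
    Units.neg_smul, one_smul]
  push_cast
  ring_nf

lemma integral_one_sub_two_mul_mul_add_sq_rpow {α t : ℝ} (hα : α ≠ 1) (ht0 : t ≠ 0)
    (ht : |t| < 1) :
    ∫ x in (-1 : ℝ)..1, (1 - 2 * x * t + t ^ 2) ^ (-α) =
      ((1 + t) ^ (2 - 2 * α) - (1 - t) ^ (2 - 2 * α)) / (2 * t * (1 - α)) := by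
  obtain ⟨ht_gt, ht_lt⟩ := abs_lt.mp ht
  have hlin : ∀ x : ℝ, 1 - 2 * x * t + t ^ 2 = (1 + t ^ 2) - 2 * t * x := fun x ↦ by ring
  have hsq : ∀ u : ℝ, 0 < u → (u ^ 2) ^ (1 - α) = u ^ (2 - 2 * α) := fun u hu ↦ by
    rw [← Real.rpow_natCast_mul hu.le]; push_cast; ring_nf
  have hα' : 1 - α ≠ 0 := sub_ne_zero.mpr hα.symm
  simp_rw [hlin]
  rw [intervalIntegral.integral_comp_sub_mul (fun x ↦ x ^ (-α)) (mul_ne_zero two_ne_zero ht0),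
    integral_rpow (.inr ⟨by contrapose! hα; linarith,
      Set.notMem_uIcc_of_lt (by nlinarith) (by nlinarith)⟩),
    show 1 + t ^ 2 - 2 * t * 1 = (1 - t) ^ 2 by ring,
    show 1 + t ^ 2 - 2 * t * -1 = (1 + t) ^ 2 by ring, neg_add_eq_sub,
    hsq _ (by linarith), hsq _ (by linarith), smul_eq_mul]
  field_simp

theorem generating_integral_series (α : ℝ) (hα : α ≠ 1) (t : ℝ) (ht0 : 0 < t)
    (ht1 : t < 1) :
    Summable (fun n : ℕ => genBinom (2 * α + 2 * (n : ℝ) - 2) (2 * n + 1) * t ^ (2 * n)) ∧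
    ∫ x in (-1:ℝ)..1, (1 - 2 * x * t + t ^ 2) ^ (-α) =
      (1 / (α - 1)) *
        ∑' n : ℕ, genBinom (2 * α + 2 * (n : ℝ) - 2) (2 * n + 1) * t ^ (2 * n) := by
  have ht : |t| < 1 := abs_lt.mpr ⟨by linarith, ht1⟩
  have hsum : HasSum (fun n : ℕ ↦ genBinom (2 * α + 2 * (n : ℝ) - 2) (2 * n + 1) * t ^ (2 * n))
      (-(((1 + t) ^ (2 - 2 * α) - (1 - t) ^ (2 - 2 * α)) / 2) / t) := by
    refine ((hasSum_choose_odd_mul_pow (2 - 2 * α) ht).neg.div_const t).congr_fun fun n ↦ ?_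
    rw [genBinom_eq_choose, show 2 - 2 * α = -(2 * α - 2) by ring, Ring.choose_neg_odd,
      sub_add_eq_add_sub, pow_succ]
    field_simp
  refine ⟨hsum.summable, ?_⟩
  have hα' : α - 1 ≠ 0 := sub_ne_zero.mpr hα
  rw [hsum.tsum_eq, integral_one_sub_two_mul_mul_add_sq_rpow hα ht0.ne' ht]
  field_simp
  ring
end

section
/- Let n be a natural number and define u : ℝ × ℝ → ℝ by u(x,t) = e^{-(n+1)(n+2)t} · C_n^{3/2}(2x-1). Then u is a classical solution of the neutral Kimura equation: for all x ∈ ℝ and t ∈ ℝ, ∂_t u(x,t) = ∂_x² ( x(1-x) · u(x,t) ), where ∂_x² denotes the second partial derivative in x of the function x ↦ x(1-x)u(x,t). -/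
/-! The shifted Gegenbauer polynomial `C_n^{3/2}(2x - 1)` is an eigenfunction of
`p ↦ (x (1 - x) p)''` with eigenvalue `-(n + 1)(n + 2)`, which is exactly what makes
`e^{-(n+1)(n+2)t} C_n^{3/2}(2x - 1)` a solution.

For the eigenvalue relation, `C = C_n^α` satisfies the Gegenbauer equation
`(1 - y²) C'' - (2α + 1) y C' + n (n + 2α) C = 0`; for `α = 3/2` this reads
`((1 - y²) C)'' = -(n + 1)(n + 2) C`, and `x (1 - x) = (1 - y²) / 4` for `y = 2x - 1`.
The Gegenbauer equation is checked on the explicit sum: the operator sends `y^m` to a combination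
of `y^(m-2)` and `y^m`, and the contributions of consecutive coefficients cancel because
`Γ(s + 1) = s Γ(s)`. -/

open MeasureTheory Real

open Polynomial

noncomputable def gegenbauerCoeff (α : ℝ) (n k : ℕ) : ℝ :=
  (-1 : ℝ) ^ k *
    (Real.Gamma ((n : ℝ) - (k : ℝ) + α) /
      (Real.Gamma α * (Nat.factorial k : ℝ) * (Nat.factorial (n - 2 * k) : ℝ))) *
    2 ^ (n - 2 * k)

noncomputable def gegenbauerPoly (α : ℝ) (n : ℕ) : ℝ[X] :=
  ∑ k ∈ Finset.range (n / 2 + 1), gegenbauerCoeff α n k • X ^ (n - 2 * k)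

theorem eval_gegenbauerPoly (α : ℝ) (n : ℕ) (x : ℝ) :
    (gegenbauerPoly α n).eval x = gegenbauer α n x := by
  simp only [gegenbauerPoly, gegenbauer, gegenbauerCoeff, eval_finsetSum, eval_smul, eval_pow,
    eval_X, smul_eq_mul, mul_pow]
  exact Finset.sum_congr rfl fun k _ => by ring

theorem gegenbauerCoeff_recurrence {α : ℝ} (hα : 0 < α) {n k m : ℕ}
    (h : n = 2 * (k + 1) + m) :
    gegenbauerCoeff α n k * (((m : ℝ) + 2) * ((m : ℝ) + 1)) +
      gegenbauerCoeff α n (k + 1) * ((n : ℝ) * (n + 2 * α) - m * (m + 2 * α)) = 0 := by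
  subst h
  have hk : 2 * (k + 1) + m - 2 * k = m + 2 := by omega
  have hk' : 2 * (k + 1) + m - 2 * (k + 1) = m := by omega
  have hs : (((2 * (k + 1) + m : ℕ) : ℝ) - k + α) = ((k : ℝ) + m + α + 1) + 1 := by
    push_cast; ring
  have hs' : (((2 * (k + 1) + m : ℕ) : ℝ) - (k + 1 : ℕ) + α) = (k : ℝ) + m + α + 1 := by
    push_cast; ring
  have hpos : (0 : ℝ) < k + m + α + 1 := by positivity
  simp only [gegenbauerCoeff, hk, hk', hs, hs', Real.Gamma_add_one hpos.ne', Nat.factorial_succ,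
    pow_succ]
  have hΓα := (Real.Gamma_pos_of_pos hα).ne'
  have hΓ := (Real.Gamma_pos_of_pos hpos).ne'
  push_cast
  field_simp
  ring

theorem derivative_derivative_X_pow {R : Type*} [CommRing R] (m : ℕ) :
    derivative (derivative (X ^ m : R[X])) = C ((m : R) * (m - 1)) * X ^ (m - 2) := by
  have := iterate_derivative_X_pow_eq_smul (R := R) m 2
  simp only [Function.iterate_succ, Function.iterate_zero, Function.comp_apply,
    Nat.cast_descFactorial_two, id_eq] at this
  rw [this, smul_eq_C_mul]

noncomputable def gegenbauerOperator (α : ℝ) (n : ℕ) : ℝ[X] →ₗ[ℝ] ℝ[X] :=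
  LinearMap.mulLeft ℝ (1 - X ^ 2) ∘ₗ derivative ∘ₗ derivative
    - LinearMap.mulLeft ℝ (C (2 * α + 1) * X) ∘ₗ derivative
    + ((n : ℝ) * (n + 2 * α)) • LinearMap.id

theorem gegenbauerOperator_apply (α : ℝ) (n : ℕ) (p : ℝ[X]) :
    gegenbauerOperator α n p = (1 - X ^ 2) * derivative (derivative p)
      - C (2 * α + 1) * X * derivative p + C ((n : ℝ) * (n + 2 * α)) * p := by
  simp [gegenbauerOperator, smul_eq_C_mul, mul_assoc]

theorem gegenbauerOperator_X_pow (α : ℝ) (n m : ℕ) :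
    gegenbauerOperator α n (X ^ m) = C ((m : ℝ) * (m - 1)) * X ^ (m - 2)
      + C ((n : ℝ) * (n + 2 * α) - m * (m + 2 * α)) * X ^ m := by
  rw [gegenbauerOperator_apply, derivative_derivative_X_pow, derivative_X_pow]
  rcases m with _ | _ | m
  · simp
  · simp only [zero_add, Nat.cast_one, sub_self, mul_zero, map_zero, zero_mul, pow_one, map_sub,
      map_mul, map_add, map_one]
    ring
  · simp only [map_sub, map_mul, map_add, map_natCast, map_ofNat, map_one,
      show m + 1 + 1 - 1 = m + 1 by omega]
    push_cast
    ring

theorem gegenbauerOperator_gegenbauerPoly {α : ℝ} (hα : 0 < α) (n : ℕ) :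
    gegenbauerOperator α n (gegenbauerPoly α n) = 0 := by
  set c := gegenbauerCoeff α n
  set N := n / 2
  let f : ℕ → ℝ[X] := fun k =>
    C (c k * (((n - 2 * k : ℕ) : ℝ) * ((n - 2 * k : ℕ) - 1))) * X ^ (n - 2 * k - 2)
  let g : ℕ → ℝ[X] := fun k =>
    C (c k * ((n : ℝ) * (n + 2 * α) - (n - 2 * k : ℕ) * ((n - 2 * k : ℕ) + 2 * α))) *
      X ^ (n - 2 * k)
  have hsum : gegenbauerOperator α n (gegenbauerPoly α n)
      = ∑ k ∈ Finset.range (N + 1), (f k + g k) := by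
    rw [gegenbauerPoly, map_sum]
    refine Finset.sum_congr rfl fun k _ => ?_
    rw [map_smul, gegenbauerOperator_X_pow, smul_add, smul_eq_C_mul, smul_eq_C_mul, ← mul_assoc,
      ← mul_assoc, ← C_mul, ← C_mul]
  have hlast : f N = 0 := by
    have : n - 2 * N = 0 ∨ n - 2 * N = 1 := by omega
    rcases this with h | h <;> simp [f, h]
  have hfirst : g 0 = 0 := by simp [g]
  have hstep : ∀ k ∈ Finset.range N, f k + g (k + 1) = 0 := by
    intro k hk
    have hkN : 2 * (k + 1) ≤ n := by have := Finset.mem_range.1 hk; omega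
    have hm : n - 2 * k = (n - 2 * (k + 1)) + 2 := by omega
    have hrec := gegenbauerCoeff_recurrence hα (show n = 2 * (k + 1) + (n - 2 * (k + 1)) by omega)
    simp only [f, g, hm, Nat.add_sub_cancel, ← add_mul, ← C_add]
    push_cast
    convert zero_mul (X ^ (n - 2 * (k + 1)) : ℝ[X]) using 2
    rw [C_eq_zero]
    linear_combination hrec
  rw [hsum, Finset.sum_add_distrib, Finset.sum_range_succ, Finset.sum_range_succ', hlast, hfirst,
    add_zero, add_zero, ← Finset.sum_add_distrib, Finset.sum_eq_zero hstep]

theorem derivative_derivative_one_sub_X_sq_mul (p : ℝ[X]) :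
    derivative (derivative ((1 - X ^ 2) * p))
      = (1 - X ^ 2) * derivative (derivative p) - 4 * X * derivative p - 2 * p := by
  simp only [derivative_mul, derivative_sub, derivative_one, derivative_X_pow]
  norm_num [map_ofNat]
  ring

theorem derivative_derivative_one_sub_X_sq_mul_gegenbauerPoly (n : ℕ) :
    derivative (derivative ((1 - X ^ 2) * gegenbauerPoly (3 / 2) n))
      = (-((n : ℝ[X]) + 1) * ((n : ℝ[X]) + 2)) * gegenbauerPoly (3 / 2) n := by
  have hode := gegenbauerOperator_gegenbauerPoly (by norm_num : (0 : ℝ) < 3 / 2) n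
  rw [gegenbauerOperator_apply] at hode
  norm_num [map_ofNat] at hode
  rw [derivative_derivative_one_sub_X_sq_mul]
  linear_combination hode

theorem derivative_derivative_comp_of_derivative_derivative_eq_zero {R : Type*} [CommSemiring R]
    (p q : R[X]) (hq : derivative (derivative q) = 0) :
    derivative (derivative (p.comp q))
      = derivative q ^ 2 * (derivative (derivative p)).comp q := by
  rw [derivative_comp, derivative_mul, hq, derivative_comp]
  ring

noncomputable def kimuraOperator (p : ℝ[X]) : ℝ[X] :=
  derivative (derivative (X * (1 - X) * p))

theorem kimuraOperator_gegenbauerPoly_comp (n : ℕ) :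
    kimuraOperator ((gegenbauerPoly (3 / 2) n).comp (2 * X - 1))
      = (-((n : ℝ[X]) + 1) * ((n : ℝ[X]) + 2)) *
          (gegenbauerPoly (3 / 2) n).comp (2 * X - 1) := by
  set P := gegenbauerPoly (3 / 2) n
  have h4 : C (1 / 4 : ℝ) * 4 = 1 := by rw [← map_ofNat C 4, ← C_mul]; norm_num
  have hquad :
      X * (1 - X) * P.comp (2 * X - 1) = C (1 / 4) * ((1 - X ^ 2) * P).comp (2 * X - 1) := by
    rw [mul_comp, sub_comp, one_comp, X_pow_comp]
    linear_combination (X ^ 2 - X) * P.comp (2 * X - 1) * h4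
  have hlin : derivative (derivative (2 * X - 1 : ℝ[X])) = 0 := by simp
  rw [kimuraOperator, hquad, derivative_C_mul, derivative_C_mul,
    derivative_derivative_comp_of_derivative_derivative_eq_zero _ _ hlin,
    derivative_derivative_one_sub_X_sq_mul_gegenbauerPoly, mul_comp]
  simp only [derivative_sub, derivative_mul, derivative_X, derivative_one, natCast_comp, add_comp,
    one_comp, ofNat_comp, neg_comp, mul_comp]
  norm_num
  linear_combination (-((n : ℝ[X]) + 1) * ((n : ℝ[X]) + 2)) * P.comp (2 * X - 1) * h4

theorem deriv_deriv_polynomial_eval {𝕜 : Type*} [NontriviallyNormedField 𝕜] (p : 𝕜[X]) :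
    deriv (deriv fun x => p.eval x) = fun x => (derivative (derivative p)).eval x := by
  funext x
  rw [show (deriv fun x => p.eval x) = fun x => (derivative p).eval x from
    funext fun _ => p.deriv, Polynomial.deriv]

theorem deriv_deriv_mul_one_sub_mul_gegenbauer (n : ℕ) (e x : ℝ) :
    deriv (deriv fun y => y * (1 - y) * (e * gegenbauer (3 / 2) n (2 * y - 1))) x
      = e * (-((n : ℝ) + 1) * (n + 2)) * gegenbauer (3 / 2) n (2 * x - 1) := by
  have hpoly : (fun y => y * (1 - y) * (e * gegenbauer (3 / 2) n (2 * y - 1)))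
      = fun y => (C e * (X * (1 - X) * (gegenbauerPoly (3 / 2) n).comp (2 * X - 1))).eval y := by
    funext y
    simp only [eval_mul, eval_C, eval_X, eval_sub, eval_one, eval_comp, eval_ofNat,
      eval_gegenbauerPoly]
    ring
  rw [hpoly, deriv_deriv_polynomial_eval, derivative_C_mul, derivative_C_mul,
    ← kimuraOperator, kimuraOperator_gegenbauerPoly_comp]
  simp only [eval_mul, eval_C, eval_X, eval_comp, eval_sub, eval_one, eval_ofNat, eval_neg,
    eval_add, eval_natCast, eval_gegenbauerPoly]
  ring

theorem kimura_classical_solution (n : ℕ) :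
    ∀ x t : ℝ,
      deriv (fun s => Real.exp (-((n : ℝ) + 1) * ((n : ℝ) + 2) * s) *
          gegenbauer (3/2) n (2 * x - 1)) t =
        deriv (deriv (fun y => y * (1 - y) *
          (Real.exp (-((n : ℝ) + 1) * ((n : ℝ) + 2) * t) *
            gegenbauer (3/2) n (2 * y - 1)))) x := by
  intro x t
  rw [deriv_deriv_mul_one_sub_mul_gegenbauer,
    (((hasDerivAt_id' t).const_mul _).exp.mul_const _).deriv]
  ring
end

section
/- Let N be a natural number, let d_0, …, d_N be real numbers, let p(x) = Σ_{n=0}^{N} d_n · C_n^{3/2}(2x-1), and for t ∈ ℝ let r(x,t) = Σ_{n=0}^{N} d_n · e^{-(n+1)(n+2)t} · C_n^{3/2}(2x-1). Then for every t, ∫_{0}^{1} x·p(x) dx − ∫_{0}^{1} x·r(x,t) dx = (1/2) · Σ_{n=0}^{N} d_n · (1 − e^{-(n+1)(n+2)t}). -/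
open MeasureTheory Real

/-!
`C_n^{3/2}` is the derivative of the Legendre polynomial `P_{n+1} = C_{n+1}^{1/2}`, so integration
by parts gives `∫₀¹ x C_n^{3/2}(2x-1) dx = P_{n+1}(1)/2 - (1/4) ∫₋₁¹ P_{n+1} = 1/2`.
Both `P_m(1) = 1` and `∫₋₁¹ P_m = 0` (`m ≥ 1`) follow from the expansion
`2^m P_m(y) = ∑ₖ (-1)^k C(m,k) C(2m-2k,m) y^(m-2k)`, whose alternating binomial sums are
coefficients of `((X+1)^2 - 1)^m = X^m (X+2)^m`. Summing over the modes, each contributes `d_n / 2`.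
-/

open Finset

section BinomialSums

open Polynomial

theorem sum_neg_one_pow_mul_choose_mul_choose_eq_coeff (M j : ℕ) :
    ∑ k ∈ range (M + 1), (-1 : ℝ) ^ k * M.choose k * (2 * M - 2 * k).choose j =
      (X ^ M * (X + 2) ^ M : ℝ[X]).coeff j := by
  have h : (X ^ M * (X + 2) ^ M : ℝ[X]) = (-1 + (X + 1) ^ 2) ^ M := by
    rw [← mul_pow]; ring
  rw [h, add_pow, finsetSum_coeff]
  refine sum_congr rfl fun k _ => ?_
  rw [← pow_mul, ← Nat.mul_sub, ← C_eq_natCast, coeff_mul_C,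
    show (-1 : ℝ[X]) ^ k = C ((-1) ^ k) by simp, coeff_C_mul, coeff_X_add_one_pow]
  ring

theorem sum_neg_one_pow_mul_choose_mul_choose_self (M : ℕ) :
    ∑ k ∈ range (M + 1), (-1 : ℝ) ^ k * M.choose k * (2 * M - 2 * k).choose M = 2 ^ M := by
  simp [sum_neg_one_pow_mul_choose_mul_choose_eq_coeff, coeff_X_pow_mul', coeff_zero_eq_eval_zero]

theorem sum_neg_one_pow_mul_choose_mul_choose_of_lt {M j : ℕ} (hj : j < M) :
    ∑ k ∈ range (M + 1), (-1 : ℝ) ^ k * M.choose k * (2 * M - 2 * k).choose j = 0 := by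
  rw [sum_neg_one_pow_mul_choose_mul_choose_eq_coeff, coeff_X_pow_mul', if_neg (by omega)]

end BinomialSums

theorem Real.Gamma_nat_add_half_eq_factorial (j : ℕ) :
    Gamma (j + 1 / 2) = (2 * j).factorial / (4 ^ j * j.factorial) * Gamma (1 / 2) := by
  induction j with
  | zero => simp
  | succ j ih =>
    rw [Nat.cast_succ, add_right_comm, Gamma_add_one (by positivity), ih,
      show 2 * (j + 1) = 2 * j + 1 + 1 by ring, Nat.factorial_succ, Nat.factorial_succ,
      Nat.factorial_succ]
    push_cast
    field_simp
    ring

theorem gegenbauer_one_half_eq (m : ℕ) (y : ℝ) :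
    gegenbauer (1 / 2) m y =
      (∑ k ∈ range (m / 2 + 1), (-1 : ℝ) ^ k * m.choose k * (2 * m - 2 * k).choose m *
        y ^ (m - 2 * k)) / 2 ^ m := by
  rw [gegenbauer, sum_div]
  refine sum_congr rfl fun k hk => ?_
  have hk : 2 * k ≤ m := by have := mem_range.1 hk; omega
  obtain ⟨i, rfl⟩ := Nat.exists_eq_add_of_le hk
  have hj : ((2 * k + i : ℕ) : ℝ) - k = (k + i : ℕ) := by push_cast; ring
  rw [hj, Gamma_nat_add_half_eq_factorial, Nat.cast_choose ℝ (by omega : k ≤ 2 * k + i),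
    Nat.cast_choose ℝ (by omega : 2 * k + i ≤ 2 * (2 * k + i) - 2 * k),
    show 2 * (2 * k + i) - 2 * k = 2 * (k + i) by omega, show 2 * k + i - k = k + i by omega,
    show 2 * (k + i) - (2 * k + i) = i by omega, show 2 * k + i - 2 * k = i by omega,
    show (4 : ℝ) ^ (k + i) = 2 ^ (2 * k + i) * 2 ^ i by
      rw [show (4 : ℝ) = 2 ^ 2 by norm_num, ← pow_mul, ← pow_add]; ring_nf]
  have : Gamma (1 / 2) ≠ 0 := (Gamma_pos_of_pos (by norm_num)).ne'
  field_simp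
  ring

theorem gegenbauer_one_half_one (m : ℕ) : gegenbauer (1 / 2) m 1 = 1 := by
  rw [gegenbauer_one_half_eq, div_eq_one_iff_eq (by positivity),
    ← sum_neg_one_pow_mul_choose_mul_choose_self m]
  simp only [one_pow, mul_one]
  refine sum_subset (range_subset_range.2 (by omega)) fun k hk hk' => ?_
  simp only [mem_range] at hk hk'
  rw [Nat.choose_eq_zero_of_lt (n := 2 * m - 2 * k) (by omega), Nat.cast_zero, mul_zero]

theorem integral_gegenbauer_one_half {m : ℕ} (hm : m ≠ 0) :
    ∫ y in (-1 : ℝ)..1, gegenbauer (1 / 2) m y = 0 := by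
  simp_rw [gegenbauer_one_half_eq]
  rw [intervalIntegral.integral_div, intervalIntegral.integral_finsetSum
    fun k _ => (by apply Continuous.intervalIntegrable; fun_prop)]
  refine div_eq_zero_iff.2 (.inl ?_)
  simp_rw [intervalIntegral.integral_const_mul, integral_pow]
  rcases Nat.even_or_odd m with ⟨r, hr⟩ | ⟨r, hr⟩
  · have hterm : ∀ k ∈ range (m / 2 + 1), (-1 : ℝ) ^ k * m.choose k *
        (2 * m - 2 * k).choose m *
          (((1 : ℝ) ^ (m - 2 * k + 1) - (-1) ^ (m - 2 * k + 1)) / ((m - 2 * k : ℕ) + 1))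
        = 2 / m * ((-1 : ℝ) ^ k * m.choose k * (2 * m - 2 * k).choose (m - 1)) := by
      intro k hk
      have hk := mem_range.1 hk
      have hodd : Odd (m - 2 * k + 1) := ⟨r - k, by omega⟩
      have hchoose := Nat.choose_succ_right_eq (2 * m - 2 * k) (m - 1)
      rw [Nat.sub_add_cancel (by omega), show 2 * m - 2 * k - (m - 1) = m - 2 * k + 1 by omega]
        at hchoose
      have hchoose' : ((2 * m - 2 * k).choose m : ℝ) * m =
          (2 * m - 2 * k).choose (m - 1) * ((m - 2 * k : ℕ) + 1) := by exact_mod_cast hchoose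
      rw [hodd.neg_one_pow, one_pow]
      field_simp
      linear_combination (2 * (m.choose k : ℝ)) * hchoose'
    rw [sum_congr rfl hterm, ← mul_sum,
      sum_subset (range_subset_range.2 (by omega : m / 2 + 1 ≤ m + 1)),
      sum_neg_one_pow_mul_choose_mul_choose_of_lt (by omega : m - 1 < m), mul_zero]
    intro k hk hk'
    simp only [mem_range] at hk hk'
    rw [Nat.choose_eq_zero_of_lt (n := 2 * m - 2 * k) (by omega), Nat.cast_zero, mul_zero]
  · refine sum_eq_zero fun k hk => ?_
    have : Even (m - 2 * k + 1) := by
      have := mem_range.1 hk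
      exact ⟨r - k + 1, by omega⟩
    simp [this.neg_one_pow]

theorem hasDerivAt_gegenbauer_succ {α : ℝ} (hα : α ≠ 0) (n : ℕ) (x : ℝ) :
    HasDerivAt (gegenbauer α (n + 1)) (2 * α * gegenbauer (α + 1) n x) x := by
  unfold gegenbauer
  refine (HasDerivAt.fun_sum fun k _ =>
    (((hasDerivAt_id x).const_mul 2).pow (n + 1 - 2 * k)).const_mul _).congr_deriv ?_
  rw [mul_sum, ← sum_subset (range_subset_range.2 (by omega : n / 2 + 1 ≤ (n + 1) / 2 + 1))]
  swap
  · intro k hk hk'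
    simp only [mem_range] at hk hk'
    rw [show n + 1 - 2 * k = 0 by omega]
    simp
  refine sum_congr rfl fun k hk => ?_
  have hk : 2 * k ≤ n := by have := mem_range.1 hk; omega
  obtain ⟨i, rfl⟩ := Nat.exists_eq_add_of_le hk
  rw [show 2 * k + i + 1 - 2 * k = i + 1 by omega, show 2 * k + i - 2 * k = i by omega,
    Nat.add_sub_cancel, Gamma_add_one hα, Nat.factorial_succ]
  by_cases hΓ : Gamma α = 0
  · simp [hΓ]
  push_cast
  rw [show (2 * k + i + 1 : ℝ) - k + α = 2 * k + i - k + (α + 1) by ring, id]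
  field_simp

theorem continuous_gegenbauer (α : ℝ) (n : ℕ) : Continuous (gegenbauer α n) := by
  unfold gegenbauer
  fun_prop

theorem integral_mul_gegenbauer_three_halves (n : ℕ) :
    ∫ x in (0 : ℝ)..1, x * gegenbauer (3 / 2) n (2 * x - 1) = 1 / 2 := by
  set Q : ℝ → ℝ := fun x => gegenbauer (1 / 2) (n + 1) (2 * x - 1)
  have hQ' (x : ℝ) : HasDerivAt Q (2 * gegenbauer (3 / 2) n (2 * x - 1)) x := by
    have h := (hasDerivAt_gegenbauer_succ (α := 1 / 2) (by norm_num) n (2 * x - 1)).comp x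
      (((hasDerivAt_id' x).const_mul 2).sub_const 1)
    exact h.congr_deriv (by norm_num; ring)
  have hQ1 : Q 1 = 1 := by norm_num [Q, gegenbauer_one_half_one]
  have hQ : ∫ x in (0 : ℝ)..1, Q x = 0 := by
    simp only [Q]
    rw [intervalIntegral.integral_comp_mul_sub (fun y => gegenbauer (1 / 2) (n + 1) y) two_ne_zero]
    norm_num [integral_gegenbauer_one_half]
  have hparts := intervalIntegral.integral_mul_deriv_eq_deriv_mul (a := 0) (b := 1)
    (fun x _ => hasDerivAt_id' x) (fun x _ => hQ' x) intervalIntegrable_const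
    (((continuous_gegenbauer _ _).comp (by fun_prop)).const_mul 2 |>.intervalIntegrable _ _)
  calc ∫ x in (0 : ℝ)..1, x * gegenbauer (3 / 2) n (2 * x - 1)
      = 1 / 2 * ∫ x in (0 : ℝ)..1, x * (2 * gegenbauer (3 / 2) n (2 * x - 1)) := by
        rw [← intervalIntegral.integral_const_mul]
        congr 1 with x
        ring
    _ = 1 / 2 := by
        rw [hparts, hQ1]
        simp [hQ]

theorem integral_mul_sum_gegenbauer_three_halves (s : Finset ℕ) (c : ℕ → ℝ) :
    ∫ x in (0 : ℝ)..1, x * ∑ n ∈ s, c n * gegenbauer (3 / 2) n (2 * x - 1) =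
      (∑ n ∈ s, c n) / 2 := by
  simp_rw [mul_sum, mul_left_comm _ (c _)]
  rw [intervalIntegral.integral_finsetSum fun n _ => by
      apply Continuous.intervalIntegrable
      have := continuous_gegenbauer (3 / 2) n
      fun_prop]
  simp only [intervalIntegral.integral_const_mul, integral_mul_gegenbauer_three_halves,
    mul_one_div, sum_div]

theorem fixation_probability_formula (N : ℕ) (d : ℕ → ℝ)
    (p : ℝ → ℝ)
    (hp : ∀ x, p x = ∑ n ∈ Finset.range (N + 1), d n * gegenbauer (3/2) n (2 * x - 1))
    (r : ℝ → ℝ → ℝ)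
    (hr : ∀ x t, r x t = ∑ n ∈ Finset.range (N + 1),
      d n * Real.exp (-((n : ℝ) + 1) * ((n : ℝ) + 2) * t) * gegenbauer (3/2) n (2 * x - 1)) :
    ∀ t : ℝ,
      (∫ x in (0:ℝ)..1, x * p x) - ∫ x in (0:ℝ)..1, x * r x t =
        (1/2) * ∑ n ∈ Finset.range (N + 1),
          d n * (1 - Real.exp (-((n : ℝ) + 1) * ((n : ℝ) + 2) * t)) := by
  intro t
  simp only [hp, hr, integral_mul_sum_gegenbauer_three_halves, mul_one_sub, sum_sub_distrib]
  ring
end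

section
/- Let x₀ ∈ (0,1) and for each natural number n set d_n = (4(2n+3)/((n+1)(n+2))) · C_n^{3/2}(2x₀−1) · x₀(1−x₀). Then the series Σ_{n=0}^{∞} d_n · e^{-(n+1)(n+2)t} converges for every t > 0, and e^{2t} · Σ_{n=0}^{∞} d_n · e^{-(n+1)(n+2)t} tends to 6·x₀(1−x₀) as t → ∞. Equivalently, the fixation probability b(t) = x₀ − (1/2)·Σ_{n=0}^{∞} d_n e^{-(n+1)(n+2)t} for the Dirac-delta initial condition at x₀ satisfies e^{2t}·(x₀ − b(t)) → 3·x₀(1−x₀) as t → ∞. -/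
/-!
The exponents `(n + 1)(n + 2)` grow quadratically, while on `[-1, 1]` the Gegenbauer values
`C_n^{3/2}` grow at most like `(n + 1)! 4^n`, so the series converges for every `t > 0` by the ratio
test. After multiplication by `e^{2t}` every term with `n ≥ 1` carries a factor
`e^{-((n + 1)(n + 2) - 2) t} → 0` and is dominated for `t ≥ 1` by its value at `t = 1`; by dominated
convergence for series only `d₀ = 6 x₀ (1 - x₀)` survives, and `x₀ - b` is half of the series.
-/

open MeasureTheory Real Filter

open Nat Topology

lemma Real.Gamma_nat_add_le_factorial_mul {α : ℝ} (hα : 0 < α) (hα₂ : α ≤ 2) (m : ℕ) :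
    Gamma (m + α) ≤ (m + 1)! * Gamma α := by
  induction m with
  | zero => simp
  | succ m ih =>
    have hpos : 0 < (m : ℝ) + α := by positivity
    calc Gamma ((m + 1 : ℕ) + α) = ((m : ℝ) + α) * Gamma (m + α) := by
          rw [← Real.Gamma_add_one hpos.ne']; push_cast; ring_nf
      _ ≤ ((m : ℝ) + 2) * ((m + 1)! * Gamma α) := by gcongr
      _ = (m + 1 + 1)! * Gamma α := by
          rw [Nat.factorial_succ (m + 1)]; push_cast; ring

lemma abs_gegenbauer_le {α y : ℝ} (hα : 0 < α) (hα₂ : α ≤ 2) (hy : |y| ≤ 1) (n : ℕ) :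
    |gegenbauer α n y| ≤ (n + 1)! * 4 ^ n := by
  have hterm : ∀ k ∈ Finset.range (n / 2 + 1),
      |(-1 : ℝ) ^ k * (Gamma (n - k + α) / (Gamma α * k ! * (n - 2 * k)!)) * (2 * y) ^ (n - 2 * k)|
        ≤ (n + 1)! * 2 ^ n := by
    intro k hk
    have hkn : k ≤ n := by rw [Finset.mem_range] at hk; omega
    have hΓα := Real.Gamma_pos_of_pos hα
    have hΓnum : 0 < Gamma (n - k + α) :=
      Real.Gamma_pos_of_pos (by rw [← Nat.cast_sub hkn]; positivity)
    have hΓ : Gamma (n - k + α) / (Gamma α * k ! * (n - 2 * k)!) ≤ (n + 1)! := by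
      have hfac : (1 : ℝ) ≤ k ! * (n - 2 * k)! := by
        exact_mod_cast Nat.one_le_iff_ne_zero.mpr (by positivity)
      rw [div_le_iff₀ (by positivity), ← Nat.cast_sub hkn]
      calc Gamma ((n - k : ℕ) + α) ≤ (n - k + 1)! * Gamma α :=
            Real.Gamma_nat_add_le_factorial_mul hα hα₂ _
        _ ≤ (n + 1)! * Gamma α := by gcongr; omega
        _ ≤ (n + 1)! * Gamma α * (k ! * (n - 2 * k)!) :=
          le_mul_of_one_le_right (by positivity) hfac
        _ = (n + 1)! * (Gamma α * k ! * (n - 2 * k)!) := by ring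
    have hpow : |2 * y| ^ (n - 2 * k) ≤ 2 ^ n := by
      calc |2 * y| ^ (n - 2 * k) ≤ 2 ^ (n - 2 * k) := by
            gcongr; rw [abs_mul, abs_two]; linarith
        _ ≤ 2 ^ n := pow_le_pow_right₀ one_le_two (by omega)
    rw [abs_mul, abs_mul, abs_pow, abs_pow, abs_neg, abs_one, one_pow, one_mul,
      abs_of_nonneg (by positivity)]
    exact mul_le_mul hΓ hpow (by positivity) (by positivity)
  calc |gegenbauer α n y| ≤ (n / 2 + 1 : ℕ) * ((n + 1)! * 2 ^ n) := by
        refine (Finset.abs_sum_le_sum_abs _ _).trans ?_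
        simpa using Finset.sum_le_card_nsmul _ _ _ hterm
    _ ≤ 2 ^ n * ((n + 1)! * 2 ^ n) := by
        gcongr
        exact_mod_cast (show n / 2 + 1 ≤ 2 ^ n by have := n.lt_two_pow_self; omega)
    _ = (n + 1)! * 4 ^ n := by
        rw [show (4 : ℝ) = 2 * 2 by norm_num, mul_pow]; ring

lemma summable_factorial_mul_four_pow_mul_exp {t : ℝ} (ht : 0 < t) :
    Summable fun n : ℕ => ((n + 1)! * 4 ^ n : ℝ) * exp (-((n : ℝ) + 1) * ((n : ℝ) + 2) * t) := by
  refine summable_of_ratio_test_tendsto_lt_one zero_lt_one (.of_forall fun n => by positivity) ?_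
  -- the ratio of consecutive terms is `4 (n + 2) e^{-2 (n + 2) t} = (2 / t) · x e^{-x}` at `x = 2 t (n + 2)`
  have hx : Tendsto (fun n : ℕ => 2 * t * ((n : ℝ) + 2)) atTop atTop :=
    (tendsto_atTop_add_const_right _ _ tendsto_natCast_atTop_atTop).const_mul_atTop (by positivity)
  have hlim := ((tendsto_pow_mul_exp_neg_atTop_nhds_zero 1).comp hx).const_mul (2 / t)
  rw [mul_zero] at hlim
  refine hlim.congr fun n => ?_
  rw [Real.norm_of_nonneg (by positivity), Real.norm_of_nonneg (by positivity),
    Nat.factorial_succ (n + 1)]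
  have hexp : exp (-((n + 1 : ℕ) + 1) * ((n + 1 : ℕ) + 2) * t) =
      exp (-((n : ℝ) + 1) * ((n : ℝ) + 2) * t) * exp (-(2 * t * ((n : ℝ) + 2))) := by
    rw [← Real.exp_add]; push_cast; ring_nf
  rw [hexp, Function.comp_apply, pow_one]
  field_simp
  push_cast
  ring

theorem tendsto_exp_mul_tsum_mul_exp_neg {a μ : ℕ → ℝ} {t₀ : ℝ} (hμ : ∀ n ≠ 0, μ 0 < μ n)
    (hs : Summable fun n => a n * exp (-μ n * t₀)) :
    Tendsto (fun t => exp (μ 0 * t) * ∑' n, a n * exp (-μ n * t)) atTop (𝓝 (a 0)) := by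
  have hμ₀ (n : ℕ) : 0 ≤ μ n - μ 0 := by
    rcases eq_or_ne n 0 with rfl | hn
    · simp
    · linarith [hμ n hn]
  have hshift (t : ℝ) : exp (μ 0 * t) * ∑' n, a n * exp (-μ n * t) =
      ∑' n, a n * exp (-((μ n - μ 0) * t)) := by
    rw [← tsum_mul_left]
    congr 1 with n
    rw [mul_left_comm, ← Real.exp_add]
    ring_nf
  simp_rw [hshift]
  have hlim : ∀ n, Tendsto (fun t => a n * exp (-((μ n - μ 0) * t))) atTop
      (𝓝 (if n = 0 then a 0 else 0)) := by
    intro n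
    split_ifs with hn
    · simp [hn]
    · have := (Real.tendsto_exp_neg_atTop_nhds_zero.comp
        (tendsto_id.const_mul_atTop (sub_pos.mpr (hμ n hn)))).const_mul (a n)
      rwa [mul_zero] at this
  have hbound : ∀ᶠ t in atTop, ∀ n, ‖a n * exp (-((μ n - μ 0) * t))‖ ≤
      exp (μ 0 * t₀) * ‖a n * exp (-μ n * t₀)‖ := by
    filter_upwards [eventually_ge_atTop t₀] with t ht n
    rw [norm_mul, norm_mul, Real.norm_of_nonneg (exp_pos _).le,
      Real.norm_of_nonneg (exp_pos _).le, mul_left_comm, ← Real.exp_add]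
    gcongr
    nlinarith [hμ₀ n]
  simpa using tendsto_tsum_of_dominated_convergence (hs.norm.mul_left _) hlim hbound

lemma gegenbauer_zero {α : ℝ} (hα : Gamma α ≠ 0) (x : ℝ) : gegenbauer α 0 x = 1 := by
  simp [gegenbauer, hα]

lemma abs_four_mul_two_mul_add_three_div_le_six (n : ℕ) :
    |4 * (2 * (n : ℝ) + 3) / (((n : ℝ) + 1) * ((n : ℝ) + 2))| ≤ 6 := by
  rw [abs_of_nonneg (by positivity), div_le_iff₀ (by positivity)]
  nlinarith [n.cast_nonneg (α := ℝ)]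

theorem fixation_probability_asymptotics (x₀ : ℝ) (hx₀ : x₀ ∈ Set.Ioo (0:ℝ) 1)
    (d : ℕ → ℝ)
    (hd : ∀ n : ℕ, d n = (4 * (2 * (n : ℝ) + 3) / (((n : ℝ) + 1) * ((n : ℝ) + 2))) *
      gegenbauer (3/2) n (2 * x₀ - 1) * (x₀ * (1 - x₀)))
    (b : ℝ → ℝ)
    (hb : ∀ t, b t = x₀ -
      (1/2) * ∑' n : ℕ, d n * Real.exp (-((n : ℝ) + 1) * ((n : ℝ) + 2) * t)) :
    (∀ t : ℝ, 0 < t →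
      Summable (fun n : ℕ => d n * Real.exp (-((n : ℝ) + 1) * ((n : ℝ) + 2) * t))) ∧
    Tendsto (fun t : ℝ => Real.exp (2 * t) *
        ∑' n : ℕ, d n * Real.exp (-((n : ℝ) + 1) * ((n : ℝ) + 2) * t))
      atTop (nhds (6 * x₀ * (1 - x₀))) ∧
    Tendsto (fun t : ℝ => Real.exp (2 * t) * (x₀ - b t))
      atTop (nhds (3 * x₀ * (1 - x₀))) := by
  obtain ⟨hx₀pos, hx₀lt⟩ := hx₀
  have hd_le (n : ℕ) : |d n| ≤ 6 * ((n + 1)! * 4 ^ n) := by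
    have hy : |2 * x₀ - 1| ≤ 1 := abs_le.mpr ⟨by linarith, by linarith⟩
    have hvar : |x₀ * (1 - x₀)| ≤ 1 := by
      rw [abs_of_pos (by nlinarith)]; nlinarith
    rw [hd, abs_mul, abs_mul, ← mul_one (6 * _)]
    gcongr
    · exact abs_four_mul_two_mul_add_three_div_le_six n
    · exact abs_gegenbauer_le (by norm_num) (by norm_num) hy n
  have hsum (t : ℝ) (ht : 0 < t) :
      Summable fun n : ℕ => d n * exp (-((n : ℝ) + 1) * ((n : ℝ) + 2) * t) := by
    refine .of_norm_bounded ((summable_factorial_mul_four_pow_mul_exp ht).mul_left 6) fun n => ?_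
    rw [norm_mul, Real.norm_of_nonneg (exp_pos _).le, ← mul_assoc]
    exact mul_le_mul_of_nonneg_right (hd_le n) (exp_pos _).le
  have hd₀ : d 0 = 6 * x₀ * (1 - x₀) := by
    rw [hd, gegenbauer_zero (Real.Gamma_pos_of_pos (by norm_num)).ne']
    norm_num
    ring
  have hlim : Tendsto (fun t => exp (2 * t) *
      ∑' n : ℕ, d n * exp (-((n : ℝ) + 1) * ((n : ℝ) + 2) * t)) atTop (𝓝 (6 * x₀ * (1 - x₀))) := by
    have hμ (n : ℕ) (hn : n ≠ 0) : ((0 : ℕ) + 1 : ℝ) * ((0 : ℕ) + 2) < ((n : ℝ) + 1) * (n + 2) := by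
      have : (1 : ℝ) ≤ n := by exact_mod_cast Nat.one_le_iff_ne_zero.mpr hn
      push_cast; nlinarith
    have h := tendsto_exp_mul_tsum_mul_exp_neg (a := d) (μ := fun n : ℕ => ((n : ℝ) + 1) * (n + 2))
      hμ (by simpa only [neg_mul] using hsum 1 one_pos)
    simp only [neg_mul] at h ⊢
    norm_num at h
    rwa [hd₀] at h
  refine ⟨hsum, hlim, ?_⟩
  simp_rw [hb]
  convert hlim.const_mul (1 / 2) using 2 <;> ring
end
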